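/- arXiv:1901.09879 — 5 statements merged into one kernel-verified Lean document; each statement's English description precedes it below -/
import Mathlib

section
/- Let S = (D, ∅_D, I, R) be an associative right string data structure over an alphabet A, and let ≈_S be the congruence on A* generated by the rules R(d)R(d') → R(d ⋆_I d') for all d, d' ∈ D with R(d ⋆_I d') ≠ R(d)R(d'). Then S presents the quotient monoid A*/≈_S, that is, the structure monoid M(D, I) is isomorphic to A*/≈_S. -/
/-- A right string data structure `S = (D, ∅_D, I, R)` over an alphabet `A`.
`I* : D × A* → D` is the left fold `fun d w => w.foldl ins d`. -/
structure RightSDS (A : Type*) (D : Type*) where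
  empty : D
  ins : D → A → D
  read : D → List A
  read_ins_empty : ∀ x : A, read (ins empty x) = [x]
  fold_read : ∀ d : D, (read d).foldl ins empty = d
  cons_surj : Function.Surjective (fun w : List A => w.foldl ins empty)
  read_inj : Function.Injective read
  read_empty : read empty = []

namespace RightSDS

variable {A D : Type*}

/-- The product `d ⋆_I d' := I*(d, R d')` on `D`. -/
def star (S : RightSDS A D) (d d' : D) : D := (S.read d').foldl S.ins d

/-- The string data structure is associative when `⋆_I` is associative. -/
def Assoc (S : RightSDS A D) : Prop :=
  ∀ a b c : D, S.star (S.star a b) c = S.star a (S.star b c)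

end RightSDS

/-- One-step reduction relation of a string rewriting system with rules `R`. -/
def OneStep {X : Type*} (R : List X → List X → Prop) (u v : List X) : Prop :=
  ∃ w a b w', R a b ∧ u = w ++ a ++ w' ∧ v = w ++ b ++ w'

/-- A rewriting system is terminating if it has no infinite sequence of
one-step reductions. -/
def Terminating {X : Type*} (R : List X → List X → Prop) : Prop :=
  ¬ ∃ f : ℕ → List X, ∀ i : ℕ, OneStep R (f i) (f (i + 1))

/-- Reduction in zero or more steps. -/
def Reduces {X : Type*} (R : List X → List X → Prop) : List X → List X → Prop :=
  Relation.ReflTransGen (OneStep R)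

/-- Confluence of a string rewriting system. -/
def Confluent {X : Type*} (R : List X → List X → Prop) : Prop :=
  ∀ u v w, Reduces R u v → Reduces R u w → ∃ z, Reduces R v z ∧ Reduces R w z

/-- A word is a normal form if no one-step reduction applies to it. -/
def IsNF {X : Type*} (R : List X → List X → Prop) (u : List X) : Prop :=
  ∀ v, ¬ OneStep R u v

/-- The monoid congruence on the free monoid `X*` generated by the rules `R`;
the monoid presented by the rewriting system is its quotient. -/
def presCon {X : Type*} (R : List X → List X → Prop) : Con (FreeMonoid X) :=
  conGen (fun a b => R (FreeMonoid.toList a) (FreeMonoid.toList b))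

/-- The monoid presented by the rewriting system `R` is isomorphic to the
structure monoid `M(D, I) = (D, ⋆_I, ∅_D)` of `S`. -/
def PresentsStructure {X A D : Type*} (S : RightSDS A D)
    (R : List X → List X → Prop) : Prop :=
  ∃ e : (presCon R).Quotient ≃ D,
    e 1 = S.empty ∧ ∀ p q : (presCon R).Quotient, e (p * q) = S.star (e p) (e q)

/-- The rewriting system `Srs(R)` on the alphabet `A`, with a rule
`R(d)R(d') → R(d ⋆_I d')` for all `d, d' ∈ D` with
`R(d ⋆_I d') ≠ R(d)R(d')`. -/
def SrsR {A D : Type*} (S : RightSDS A D) : List A → List A → Prop :=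
  fun u v => ∃ d d' : D,
    u = S.read d ++ S.read d' ∧ v = S.read (S.star d d') ∧
      S.read (S.star d d') ≠ S.read d ++ S.read d'


/-!
Evaluating words by `w ↦ I*(∅_D, w)` is constant on the rules of `Srs(R)`, and associativity of
`⋆_I` makes it multiplicative, so it descends to a monoid map from `A*/≈_S` onto `D`. Its inverse
is `d ↦ [R d]`: every word `w` is `≈_S`-equivalent to the reading of its evaluation, by induction
on `w` from the right, since `I*(∅_D, t x) = I*(∅_D, t) ⋆_I I(∅_D, x)` and
`R(I(∅_D, x)) = x`.
-/

namespace RightSDS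

variable {A D : Type*} (S : RightSDS A D)

def eval (w : List A) : D := w.foldl S.ins S.empty

theorem eval_read (d : D) : S.eval (S.read d) = d := S.fold_read d

theorem eval_append_read (u : List A) (d : D) :
    S.eval (u ++ S.read d) = S.star (S.eval u) d := by
  rw [eval, List.foldl_append]; rfl

theorem star_empty (d : D) : S.star d S.empty = d := by
  simp [star, S.read_empty]

theorem star_ins_empty (d : D) (x : A) : S.star d (S.ins S.empty x) = S.ins d x := by
  simp [star, S.read_ins_empty]

theorem foldl_ins_eq_star_eval (hS : S.Assoc) (u : List A) (d : D) :
    u.foldl S.ins d = S.star d (S.eval u) := by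
  induction u generalizing d with
  | nil => exact (S.star_empty d).symm
  | cons x t ih =>
    rw [eval, List.foldl_cons, List.foldl_cons, ih, ih (S.ins S.empty x), ← hS,
      star_ins_empty]

theorem eval_append (hS : S.Assoc) (u v : List A) :
    S.eval (u ++ v) = S.star (S.eval u) (S.eval v) := by
  rw [eval, List.foldl_append, foldl_ins_eq_star_eval S hS]; rfl

def evalCon (hS : S.Assoc) : Con (FreeMonoid A) where
  toSetoid := Setoid.ker (S.eval ∘ FreeMonoid.toList)
  mul' {u v u' v'} h h' := by
    change S.eval (u * u').toList = S.eval (v * v').toList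
    rw [FreeMonoid.toList_mul, FreeMonoid.toList_mul, eval_append S hS, eval_append S hS]
    exact congrArg₂ S.star h h'

theorem presCon_srsR_le_evalCon (hS : S.Assoc) : presCon (SrsR S) ≤ S.evalCon hS := by
  refine Con.conGen_le.mpr ?_
  rintro u v ⟨d, d', hu, hv, -⟩
  change S.eval u.toList = S.eval v.toList
  rw [hu, hv, eval_append_read, eval_read, eval_read]

theorem presCon_srsR_read_star (d d' : D) :
    presCon (SrsR S) (.ofList (S.read (S.star d d'))) (.ofList (S.read d ++ S.read d')) := by
  by_cases h : S.read (S.star d d') = S.read d ++ S.read d'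
  · exact h ▸ Con.refl _ _
  · exact Con.symm _ (ConGen.Rel.of _ _ ⟨d, d', rfl, rfl, h⟩)

theorem presCon_srsR_read_eval (w : List A) :
    presCon (SrsR S) (.ofList (S.read (S.eval w))) (.ofList w) := by
  induction w using List.reverseRecOn with
  | nil =>
    rw [eval, List.foldl_nil, S.read_empty]
    exact Con.refl _ _
  | append_singleton t x ih =>
    have hx : S.eval (t ++ [x]) = S.star (S.eval t) (S.ins S.empty x) := by
      rw [star_ins_empty, eval, List.foldl_append]; rfl
    rw [hx]
    refine (S.presCon_srsR_read_star _ _).trans ?_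
    rw [S.read_ins_empty, FreeMonoid.ofList_append, FreeMonoid.ofList_append]
    exact Con.mul _ ih (Con.refl _ _)

def srsRQuotientEquiv (hS : S.Assoc) : (presCon (SrsR S)).Quotient ≃ D where
  toFun q := q.liftOn (S.eval ∘ FreeMonoid.toList) fun _ _ h => S.presCon_srsR_le_evalCon hS h
  invFun d := (FreeMonoid.ofList (S.read d) : FreeMonoid A)
  left_inv q := q.induction_on fun w => (Con.eq _).mpr (S.presCon_srsR_read_eval w.toList)
  right_inv := S.eval_read

theorem srsRQuotientEquiv_mul (hS : S.Assoc) (p q : (presCon (SrsR S)).Quotient) :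
    S.srsRQuotientEquiv hS (p * q) =
      S.star (S.srsRQuotientEquiv hS p) (S.srsRQuotientEquiv hS q) :=
  Con.induction_on₂ p q fun u v => by
    rw [← Con.coe_mul]
    exact (congrArg S.eval (FreeMonoid.toList_mul u v)).trans (S.eval_append hS _ _)

end RightSDS

/-- For an associative right string data structure `S`, the structure monoid
`M(D, I)` is isomorphic to the quotient of `A*` by the congruence `≈_S`
generated by the rules of `Srs(R)`: `S` presents `A*/≈_S`. -/
theorem presents_quotient_by_srsR {A D : Type*} (S : RightSDS A D)
    (hS : S.Assoc) :
    ∃ e : (presCon (SrsR S)).Quotient ≃ D,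
      e 1 = S.empty ∧
        ∀ p q : (presCon (SrsR S)).Quotient, e (p * q) = S.star (e p) (e q) :=
  ⟨S.srsRQuotientEquiv hS, rfl, S.srsRQuotientEquiv_mul hS⟩
end

section
/- Let (D, ∅_D, I, J, R) be a string data bistructure over an alphabet A. Then for every word w ∈ A*, the left fold of I and the right fold of J applied to w starting from ∅_D coincide: I*(∅_D, w) = J*(w, ∅_D). -/
/-- A string data bistructure `(D, ∅_D, I, J, R)` over an alphabet `A`:
`(D, ∅_D, I, R)` is a right string data structure (with insertion map the left
fold `I*`), `(D, ∅_D, J, R)` is a left string data structure (with insertion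
map the right fold `J*`), and `I` and `J` commute. -/
structure SDBistructure (A : Type*) (D : Type*) where
  empty : D
  insI : D → A → D
  insJ : D → A → D
  read : D → List A
  read_insI_empty : ∀ x : A, read (insI empty x) = [x]
  foldI_read : ∀ d : D, (read d).foldl insI empty = d
  consI_surj : Function.Surjective (fun w : List A => w.foldl insI empty)
  read_insJ_empty : ∀ x : A, read (insJ empty x) = [x]
  foldJ_read : ∀ d : D, (read d).foldr (fun x e => insJ e x) empty = d
  consJ_surj : Function.Surjective
    (fun w : List A => w.foldr (fun x e => insJ e x) empty)
  read_inj : Function.Injective read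
  read_empty : read empty = []
  comm : ∀ (d : D) (x y : A), insJ (insI d x) y = insI (insJ d y) x

namespace SDBistructure

variable {A D : Type*}

/-- The product `d ⋆_I d' := I*(d, R d')`. -/
def starI (B : SDBistructure A D) (d d' : D) : D := (B.read d').foldl B.insI d

/-- The product `d ⋆_J d' := J*(R d', d)`. -/
def starJ (B : SDBistructure A D) (d d' : D) : D :=
  (B.read d').foldr (fun x e => B.insJ e x) d

end SDBistructure

/-!
Reading one-letter words shows `I(∅, x) = J(∅, x)`, since both read as `[x]` and `R` is injective.
Since `J(-, y)` commutes with every `I(-, x)`, it commutes with the whole fold `I*`, so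
`I*(∅, x·u) = I*(J(∅, x), u) = J(I*(∅, u), x)`, and induction on `u` concludes.
-/

namespace SDBistructure

variable {A D : Type*} (B : SDBistructure A D)

theorem insI_empty_eq_insJ_empty (x : A) : B.insI B.empty x = B.insJ B.empty x :=
  B.read_inj (by rw [B.read_insI_empty, B.read_insJ_empty])

theorem foldl_insI_insJ (w : List A) (d : D) (y : A) :
    w.foldl B.insI (B.insJ d y) = B.insJ (w.foldl B.insI d) y := by
  induction w generalizing d with
  | nil => rfl
  | cons x u ih => rw [List.foldl_cons, List.foldl_cons, ← B.comm, ih]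

end SDBistructure

/-- For a string data bistructure, the left fold of `I` and the right fold of
`J` applied to any word `w`, starting from `∅_D`, coincide:
`I*(∅_D, w) = J*(w, ∅_D)`. -/
theorem foldI_eq_foldJ {A D : Type*} (B : SDBistructure A D) :
    ∀ w : List A,
      w.foldl B.insI B.empty = w.foldr (fun x e => B.insJ e x) B.empty := by
  intro w
  induction w with
  | nil => rfl
  | cons x u ih =>
    rw [List.foldl_cons, List.foldr_cons, B.insI_empty_eq_insJ_empty, B.foldl_insI_insJ, ih]
end

section
/- Let (D, ∅_D, I, J, R) be a string data bistructure over an alphabet A, with products d ⋆_I d' := I*(d, R(d')) and d ⋆_J d' := J*(R(d'), d). Then both ⋆_I and ⋆_J are associative, and d ⋆_I d' = d' ⋆_J d holds for all d, d' ∈ D. -/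
section CommutingFolds

variable {A D : Type*} (f g : D → A → D) (hfg : ∀ d x y, g (f d x) y = f (g d y) x)
include hfg

theorem List.foldr_apply_comm (u : List A) (d : D) (x : A) :
    u.foldr (fun y e => g e y) (f d x) = f (u.foldr (fun y e => g e y) d) x := by
  induction u with
  | nil => rfl
  | cons y u ih => simp only [List.foldr_cons, ih, hfg]

theorem List.foldl_foldr_comm (u v : List A) (d : D) :
    v.foldl f (u.foldr (fun y e => g e y) d) = u.foldr (fun y e => g e y) (v.foldl f d) := by
  induction v generalizing d with
  | nil => rfl
  | cons x v ih => simp only [List.foldl_cons, ← ih, List.foldr_apply_comm f g hfg]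

end CommutingFolds

namespace SDBistructure

variable {A D : Type*} (B : SDBistructure A D)

theorem foldl_insI_eq_starJ (w : List A) (d : D) :
    w.foldl B.insI d = B.starJ (w.foldl B.insI B.empty) d := by
  conv_lhs => rw [← B.foldJ_read d]
  exact List.foldl_foldr_comm _ _ B.comm _ _ _

theorem starI_eq_starJ (d d' : D) : B.starI d d' = B.starJ d' d := by
  rw [starI, foldl_insI_eq_starJ, foldI_read]

theorem starI_assoc (a b c : D) : B.starI (B.starI a b) c = B.starI a (B.starI b c) :=
  calc B.starI (B.starI a b) c = (B.read b ++ B.read c).foldl B.insI a :=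
        (List.foldl_append ..).symm
    _ = B.starJ ((B.read b ++ B.read c).foldl B.insI B.empty) a := B.foldl_insI_eq_starJ ..
    _ = B.starJ (B.starI b c) a := by rw [List.foldl_append, foldI_read, starI]
    _ = B.starI a (B.starI b c) := (B.starI_eq_starJ ..).symm

theorem starJ_assoc (a b c : D) : B.starJ (B.starJ a b) c = B.starJ a (B.starJ b c) := by
  simp only [← starI_eq_starJ, starI_assoc]

end SDBistructure

/-- For a string data bistructure, both products `⋆_I` and `⋆_J` are
associative, and `d ⋆_I d' = d' ⋆_J d` holds for all `d, d' ∈ D`. -/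
theorem starI_starJ_assoc_opposite {A D : Type*} (B : SDBistructure A D) :
    (∀ a b c : D, B.starI (B.starI a b) c = B.starI a (B.starI b c)) ∧
    (∀ a b c : D, B.starJ (B.starJ a b) c = B.starJ a (B.starJ b c)) ∧
    (∀ d d' : D, B.starI d d' = B.starJ d' d) :=
  ⟨B.starI_assoc, B.starJ_assoc, B.starI_eq_starJ⟩
end

section
/- Let (D, ∅_D, I, J, R) be a string data bistructure over an alphabet A. Then the structure monoids M(D, I) = (D, ⋆_I, ∅_D) and M(D, J) = (D, ⋆_J, ∅_D) are anti-isomorphic: M(D, I) is isomorphic to the opposite monoid of M(D, J), and the identity map of D is such an anti-isomorphism. -/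
section FoldComm

variable {A D : Type*} {f g : D → A → D}

theorem apply_foldr_of_comm (h : ∀ d x y, g (f d x) y = f (g d y) x)
    (v : List A) (d : D) (x : A) :
    f (v.foldr (fun y e => g e y) d) x = v.foldr (fun y e => g e y) (f d x) := by
  induction v with
  | nil => rfl
  | cons y v ih => simp only [List.foldr_cons, ← h, ih]

theorem foldl_foldr_of_comm (h : ∀ d x y, g (f d x) y = f (g d y) x)
    (w v : List A) (d : D) :
    w.foldl f (v.foldr (fun y e => g e y) d) = v.foldr (fun y e => g e y) (w.foldl f d) := by
  induction w generalizing d with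
  | nil => rfl
  | cons x w ih => simp only [List.foldl_cons, apply_foldr_of_comm h, ih]

end FoldComm

namespace SDBistructure

variable {A D : Type*} (B : SDBistructure A D)

theorem empty_starI (d : D) : B.starI B.empty d = d := B.foldI_read d

theorem starI_empty (d : D) : B.starI d B.empty = d := by
  simp only [starI, B.read_empty, List.foldl_nil]

theorem empty_starJ (d : D) : B.starJ B.empty d = d := by
  rw [← starI_eq_starJ, starI_empty]

theorem starJ_empty (d : D) : B.starJ d B.empty = d := by
  rw [← starI_eq_starJ, empty_starI]

end SDBistructure

/-- For a string data bistructure, the structure monoids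
`M(D, I) = (D, ⋆_I, ∅_D)` and `M(D, J) = (D, ⋆_J, ∅_D)` are monoids and are
anti-isomorphic, the identity map of `D` being an anti-isomorphism:
`d ⋆_I d' = d' ⋆_J d`, so `M(D, I)` is isomorphic to the opposite of
`M(D, J)`. -/
theorem structure_monoids_anti_isomorphic {A D : Type*} (B : SDBistructure A D) :
    (∀ a b c : D, B.starI (B.starI a b) c = B.starI a (B.starI b c)) ∧
    (∀ a b c : D, B.starJ (B.starJ a b) c = B.starJ a (B.starJ b c)) ∧
    (∀ d : D, B.starI B.empty d = d ∧ B.starI d B.empty = d) ∧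
    (∀ d : D, B.starJ B.empty d = d ∧ B.starJ d B.empty = d) ∧
    (∀ d d' : D, B.starI d d' = B.starJ d' d) :=
  ⟨B.starI_assoc, B.starJ_assoc, fun d => ⟨B.empty_starI d, B.starI_empty d⟩,
    fun d => ⟨B.empty_starJ d, B.starJ_empty d⟩, B.starI_eq_starJ⟩
end

section
/- For every n ≥ 1, the rewriting system PreColo_2(n) on the alphabet Q_n, with rules Γ₂(n) ∪ Δ₂(n), is a finite semi-quadratic presentation of the Chinese monoid C_n: every rule has source of length 2 (after identifying letters of [n] with the corresponding generators c_x, the rules of Γ₂(n) have source of length 2 over the generators c_x) and target of length at most 2, and the monoid presented by PreColo_2(n) is isomorphic to C_n. -/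
/-! Chinese staircases over `[n] = {1, …, n}` are represented as functions
`t : ℕ → ℕ → ℕ`, where `t i j` is the entry in row `i` and column `j`
(only the entries with `1 ≤ j ≤ i ≤ n` are relevant, the others vanish). -/

/-- Update entry `(i, j)` of a staircase by applying `f`. -/
def updE (t : ℕ → ℕ → ℕ) (i j : ℕ) (f : ℕ → ℕ) : ℕ → ℕ → ℕ :=
  fun a b => if a = i ∧ b = j then f (t a b) else t a b

/-- `t` is a Chinese staircase over `[n]`: entries outside the triangle
`1 ≤ j ≤ i ≤ n` vanish. -/
def IsStaircase (n : ℕ) (t : ℕ → ℕ → ℕ) : Prop :=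
  ∀ i j : ℕ, ¬(1 ≤ j ∧ j ≤ i ∧ i ≤ n) → t i j = 0

/-- The greatest `j ∈ [1, n]` with `t n j ≠ 0`, or `x` if row `n` is zero. -/
def maxCol (t : ℕ → ℕ → ℕ) (n x : ℕ) : ℕ :=
  (((Finset.Icc 1 n).filter (fun j => t n j ≠ 0)).max).unbotD x

/-- The least `j ∈ [1, i]` with `t i j ≠ 0`, or `i` if row `i` is zero. -/
def minCol (t : ℕ → ℕ → ℕ) (i : ℕ) : ℕ :=
  (((Finset.Icc 1 i).filter (fun j => t i j ≠ 0)).min).untopD i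

/-- The right insertion `C_r` of a letter `x` into a staircase over `[n]`. -/
def Cr : ℕ → (ℕ → ℕ → ℕ) → ℕ → (ℕ → ℕ → ℕ)
  | 0, t, _ => t
  | n + 1, t, x =>
    if x = n + 1 then updE t (n + 1) (n + 1) (· + 1)
    else
      if maxCol t (n + 1) x ≤ x then Cr n t x
      else if maxCol t (n + 1) x < n + 1 then
        Cr n (updE (updE t (n + 1) (maxCol t (n + 1) x) (· - 1)) (n + 1) x (· + 1))
          (maxCol t (n + 1) x)
      else updE (updE t (n + 1) (n + 1) (· - 1)) (n + 1) x (· + 1)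

/-- One step, at row `i`, of the first phase of the left insertion `C_l`;
the state is a pair of the current staircase and `y ∈ [n] ∪ {λ}`. -/
def ClStep (s : (ℕ → ℕ → ℕ) × Option ℕ) (i : ℕ) : (ℕ → ℕ → ℕ) × Option ℕ :=
  if ∀ j ∈ Finset.Icc 1 i, s.1 i j = 0 then s
  else
    match s.2 with
    | none =>
        if minCol s.1 i < i then
          (updE (updE s.1 i (minCol s.1 i) (· - 1)) i i (· + 1), some (minCol s.1 i))
        else (updE s.1 i i (· - 1), some (minCol s.1 i))
    | some y0 =>
        if minCol s.1 i < y0 then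
          (updE (updE s.1 i (minCol s.1 i) (· - 1)) i y0 (· + 1), some (minCol s.1 i))
        else (s.1, some y0)

/-- The first phase of `C_l`, on rows `1, …, k`, with initial state `(t, λ)`. -/
def ClLoop (t : ℕ → ℕ → ℕ) (k : ℕ) : (ℕ → ℕ → ℕ) × Option ℕ :=
  (List.range k).foldl (fun s m => ClStep s (m + 1)) (t, none)

/-- The left insertion `C_l` of a letter `x` into a staircase. -/
def Cl (t : ℕ → ℕ → ℕ) (x : ℕ) : ℕ → ℕ → ℕ :=
  match ClLoop t (x - 1) with
  | (t', none) => updE t' x x (· + 1)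
  | (t', some y0) => updE t' x y0 (· + 1)

/-- The row reading of row `i`: the word
`(i1)^{t_{i1}} (i2)^{t_{i2}} ⋯ (i(i-1))^{t_{i(i-1)}} (i)^{t_i}`. -/
def rowWord (t : ℕ → ℕ → ℕ) (i : ℕ) : List ℕ :=
  ((List.range (i - 1)).map fun k =>
      (List.replicate (t i (k + 1)) [i, k + 1]).flatten).flatten
    ++ List.replicate (t i i) i

/-- The row reading `R_r` of a staircase over `[n]`, row by row from top to
bottom. -/
def Rr (n : ℕ) (t : ℕ → ℕ → ℕ) : List ℕ :=
  ((List.range n).map fun k => rowWord t (k + 1)).flatten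

/-- The product `t ⋆_{C_r} t'`: the left fold of `C_r` over the letters of
`R_r t'` starting from `t`. -/
def starCr (n : ℕ) (t t' : ℕ → ℕ → ℕ) : ℕ → ℕ → ℕ :=
  (Rr n t').foldl (Cr n) t

/-- The column generator `c_{yx}` (or `c_x` when `y = x`): single entry `1`
at `(y, x)`. -/
def colG (y x : ℕ) : ℕ → ℕ → ℕ := fun a b => if a = y ∧ b = x then 1 else 0

/-- The square generator `c_{xx}`: single entry `2` at `(x, x)`. -/
def sqG (x : ℕ) : ℕ → ℕ → ℕ := fun a b => if a = x ∧ b = x then 2 else 0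

/-- The generator `c_x`. -/
def cOf (x : ℕ) : ℕ → ℕ → ℕ := colG x x

/-- `c_{yx}` where, for `y = x`, `c_{xx}` denotes the square generator. -/
def genYX (y x : ℕ) : ℕ → ℕ → ℕ := if y = x then sqG x else colG y x

/-- The set `Q_n` of column and square generators. -/
def Qn (n : ℕ) : Set (ℕ → ℕ → ℕ) :=
  {c | (∃ x y : ℕ, 1 ≤ x ∧ x < y ∧ y ≤ n ∧ c = colG y x) ∨
       (∃ x : ℕ, 1 ≤ x ∧ x ≤ n ∧ c = colG x x) ∨
       (∃ x : ℕ, 1 < x ∧ x < n ∧ c = sqG x)}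

/-- The alphabet `Q_n`. -/
abbrev QL (n : ℕ) : Type := {c : ℕ → ℕ → ℕ // c ∈ Qn n}

/-- The `Q_n`-reading of row `i` of a staircase:
`c_{i1}^{t_{i1}} ⋯ c_{i(i-1)}^{t_{i(i-1)}}` followed by `c_{ii}^{t_i/2}` if
`t_i` is even and by `c_i · c_{ii}^{(t_i - 1)/2}` if `t_i` is odd. -/
def rowQ (t : ℕ → ℕ → ℕ) (i : ℕ) : List (ℕ → ℕ → ℕ) :=
  ((List.range (i - 1)).map fun k =>
      List.replicate (t i (k + 1)) (colG i (k + 1))).flatten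
    ++ (if t i i % 2 = 0 then List.replicate (t i i / 2) (sqG i)
        else colG i i :: List.replicate ((t i i - 1) / 2) (sqG i))

/-- The reading `R_{Q_n}` of a staircase, row by row from top to bottom, as a
word of generators. -/
def RQnWord (n : ℕ) (t : ℕ → ℕ → ℕ) : List (ℕ → ℕ → ℕ) :=
  ((List.range n).map fun k => rowQ t (k + 1)).flatten

/-- The rewriting system `Srs(Q_n, SdsC_n)` on the alphabet `Q_n`, with rules
`c_u·c_v → R_{Q_n}(c_u ⋆_{C_r} c_v)` whenever
`c_u·c_v ≠ R_{Q_n}(c_u ⋆_{C_r} c_v)`. Words over `Q_n` are encoded as lists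
of elements of the subtype `QL n`, compared through their underlying
staircases. -/
def SrsQn (n : ℕ) (u v : List (QL n)) : Prop :=
  ∃ c c' : QL n, u = [c, c'] ∧
    v.map Subtype.val = RQnWord n (starCr n c.1 c'.1) ∧
    u.map Subtype.val ≠ RQnWord n (starCr n c.1 c'.1)

/-- The leftmost one-step reduction: a reduction whose left context is of
minimal length among all reductions with the same source. -/
def LStep {X : Type*} (R : List X → List X → Prop) (u v : List X) : Prop :=
  ∃ w a b w', R a b ∧ u = w ++ a ++ w' ∧ v = w ++ b ++ w' ∧
    ∀ w₂ a₂ b₂ w₂', R a₂ b₂ → u = w₂ ++ a₂ ++ w₂' → w.length ≤ w₂.length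

/-- The rightmost one-step reduction: a reduction whose left context is of
maximal length among all reductions with the same source. -/
def RStep {X : Type*} (R : List X → List X → Prop) (u v : List X) : Prop :=
  ∃ w a b w', R a b ∧ u = w ++ a ++ w' ∧ v = w ++ b ++ w' ∧
    ∀ w₂ a₂ b₂ w₂', R a₂ b₂ → u = w₂ ++ a₂ ++ w₂' → w₂.length ≤ w.length

/-- `IterRel r k a b`: there is a path of length exactly `k` from `a` to `b`
along the relation `r`. -/
def IterRel {α : Type*} (r : α → α → Prop) : ℕ → α → α → Prop
  | 0, a, b => a = b
  | k + 1, a, c => ∃ b, r a b ∧ IterRel r k b c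

/-- The alphabet `[n]` of the Chinese monoid. -/
abbrev ChLetter (n : ℕ) : Type := {x : ℕ // 1 ≤ x ∧ x ≤ n}

/-- The Chinese congruence on `[n]*`, generated by the relations
`zyx = zxy = yzx` for all `1 ≤ x ≤ y ≤ z ≤ n`; the Chinese monoid `C_n` is
its quotient. -/
def ChineseCon (n : ℕ) : Con (FreeMonoid (ChLetter n)) :=
  conGen (fun u v => ∃ x y z : ChLetter n, x.1 ≤ y.1 ∧ y.1 ≤ z.1 ∧
    ((u = FreeMonoid.ofList [z, y, x] ∧ v = FreeMonoid.ofList [z, x, y]) ∨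
     (u = FreeMonoid.ofList [z, y, x] ∧ v = FreeMonoid.ofList [y, z, x])))

/-- The rewriting system `PreColo_2(n)` on the alphabet `Q_n`, with the rules
`Γ₂(n) ∪ Δ₂(n)`. Words over `Q_n` are encoded as lists of elements of the
subtype `QL n`, compared through their underlying staircases. -/
def PreColo (n : ℕ) (u v : List (QL n)) : Prop :=
  -- γ_{y,x} : c_y·c_x → c_{yx}, for 1 ≤ x < y ≤ n
  (∃ x y : ℕ, 1 ≤ x ∧ x < y ∧ y ≤ n ∧
      u.map Subtype.val = [cOf y, cOf x] ∧ v.map Subtype.val = [colG y x]) ∨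
  -- γ_{x,x} : c_x·c_x → c_{xx}, for 1 < x < n
  (∃ x : ℕ, 1 < x ∧ x < n ∧
      u.map Subtype.val = [cOf x, cOf x] ∧ v.map Subtype.val = [sqG x]) ∨
  -- γ_{y,yx} : c_y·c_{yx} → c_{yx}·c_y, for 1 ≤ x < y ≤ n
  (∃ x y : ℕ, 1 ≤ x ∧ x < y ∧ y ≤ n ∧
      u.map Subtype.val = [cOf y, colG y x] ∧
      v.map Subtype.val = [colG y x, cOf y]) ∨
  -- γ_{yy,x} : c_{yy}·c_x → c_{yx}·c_y, for 1 ≤ x < y < n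
  (∃ x y : ℕ, 1 ≤ x ∧ x < y ∧ y < n ∧
      u.map Subtype.val = [sqG y, cOf x] ∧
      v.map Subtype.val = [colG y x, cOf y]) ∨
  -- γ_{zy,x} : c_{zy}·c_x → c_y·c_{zx}, for 1 ≤ x ≤ y < z ≤ n
  (∃ x y z : ℕ, 1 ≤ x ∧ x ≤ y ∧ y < z ∧ z ≤ n ∧
      u.map Subtype.val = [colG z y, cOf x] ∧
      v.map Subtype.val = [cOf y, colG z x]) ∨
  -- γ_{z,yx} : c_z·c_{yx} → c_y·c_{zx}, for 1 ≤ x ≤ y < z ≤ n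
  (∃ x y z : ℕ, 1 ≤ x ∧ x ≤ y ∧ y < z ∧ z ≤ n ∧
      u.map Subtype.val = [cOf z, genYX y x] ∧
      v.map Subtype.val = [cOf y, colG z x]) ∨
  -- γ_{zx,y} : c_{zx}·c_y → c_y·c_{zx}, for 1 ≤ x < y < z ≤ n
  (∃ x y z : ℕ, 1 ≤ x ∧ x < y ∧ y < z ∧ z ≤ n ∧
      u.map Subtype.val = [colG z x, cOf y] ∧
      v.map Subtype.val = [cOf y, colG z x])

/-! Sending each generator of `Q_n` to its row reading (`c_{yx} ↦ yx`, `c_x ↦ x`,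
`c_{xx} ↦ xx`) turns every rule of `PreColo_2(n)` into a Chinese relation. Conversely
`x ↦ c_x` respects the Chinese relations: for `x ≤ y ≤ z` with `x < z`, each of the
words `c_z c_y c_x`, `c_z c_x c_y`, `c_y c_z c_x` rewrites to `c_y · c_{zx}`. The two
morphisms are mutually inverse on generators because `c_y c_x → c_{yx}` and
`c_x c_x → c_{xx}` are rules. -/

theorem List.flatten_map_range_eq_of_eq_nil {α : Type*} {f : ℕ → List α} {m j : ℕ}
    (hj : j < m) (h : ∀ k < m, k ≠ j → f k = []) : ((List.range m).map f).flatten = f j := by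
  induction m with
  | zero => omega
  | succ m ih =>
    rw [List.range_succ, List.map_append, List.flatten_append, List.map_singleton,
      List.flatten_singleton]
    rcases Nat.lt_or_ge j m with hjm | hjm
    · rw [ih hjm fun k hk hkj => h k (by omega) hkj, h m (by omega) (by omega),
        List.append_nil]
    · obtain rfl : j = m := by omega
      rw [List.flatten_eq_nil_iff.mpr, List.nil_append]
      simp only [List.mem_map, List.mem_range]
      rintro _ ⟨k, hk, rfl⟩
      exact h k (by omega) (by omega)

lemma presCon_le_ker {X M : Type*} [Monoid M] {R : List X → List X → Prop}
    {f : FreeMonoid X →* M} (h : ∀ u v, R u v → f (FreeMonoid.ofList u) = f (FreeMonoid.ofList v)) :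
    presCon R ≤ Con.ker f :=
  Con.conGen_le.mpr fun _ _ hab => h _ _ hab

lemma finite_setOf_rel_of_length_le {X : Type*} [Finite X] {R : List X → List X → Prop} {k : ℕ}
    (h : ∀ u v, R u v → u.length ≤ k ∧ v.length ≤ k) : {p : List X × List X | R p.1 p.2}.Finite :=
  ((List.finite_length_le X k).prod (List.finite_length_le X k)).subset fun _ hp => h _ _ hp

namespace ChinesePresentation

variable {n : ℕ}

lemma rowWord_eq_replicate {t : ℕ → ℕ → ℕ} {i : ℕ} (h : ∀ j < i, t i j = 0) :
    rowWord t i = List.replicate (t i i) i := by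
  rw [rowWord, List.flatten_eq_nil_iff.mpr, List.nil_append]
  simp only [List.mem_map, List.mem_range]
  rintro _ ⟨k, hk, rfl⟩
  rw [h _ (by omega), List.replicate_zero, List.flatten_nil]

lemma rowWord_eq_nil {t : ℕ → ℕ → ℕ} {i : ℕ} (h : ∀ j, t i j = 0) : rowWord t i = [] := by
  rw [rowWord_eq_replicate fun j _ => h j, h, List.replicate_zero]

lemma Rr_eq_rowWord {t : ℕ → ℕ → ℕ} {y : ℕ} (hy : 1 ≤ y) (hyn : y ≤ n)
    (ht : ∀ a b, a ≠ y → t a b = 0) : Rr n t = rowWord t y := by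
  rw [Rr, List.flatten_map_range_eq_of_eq_nil (j := y - 1) (by omega), Nat.sub_add_cancel hy]
  exact fun k _ hk => rowWord_eq_nil fun j => ht _ _ (by omega)

lemma Rr_colG {x y : ℕ} (hx : 1 ≤ x) (hxy : x < y) (hyn : y ≤ n) : Rr n (colG y x) = [y, x] := by
  rw [Rr_eq_rowWord (t := colG y x) (by omega) hyn fun a b ha => if_neg fun h => ha h.1, rowWord,
    List.flatten_map_range_eq_of_eq_nil (j := x - 1) (by omega)]
  · simp [colG, Nat.sub_add_cancel hx, hxy.ne']
  · intro k _ hk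
    rw [colG, if_neg (by omega), List.replicate_zero, List.flatten_nil]

lemma Rr_diagonal {x : ℕ} (m : ℕ) (hx : 1 ≤ x) (hxn : x ≤ n) :
    Rr n (fun a b => if a = x ∧ b = x then m else 0) = List.replicate m x := by
  rw [Rr_eq_rowWord hx hxn fun a b ha => if_neg fun h => ha h.1,
    rowWord_eq_replicate fun j hj => if_neg fun h => hj.ne h.2, if_pos ⟨rfl, rfl⟩]

lemma Rr_cOf {x : ℕ} (hx : 1 ≤ x) (hxn : x ≤ n) : Rr n (cOf x) = [x] :=
  Rr_diagonal 1 hx hxn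

lemma Rr_sqG {x : ℕ} (hx : 1 ≤ x) (hxn : x ≤ n) : Rr n (sqG x) = [x, x] :=
  Rr_diagonal 2 hx hxn

/-- Letters outside `[n]` are dropped; they never occur in the reading of a generator. -/
def toLetter (n m : ℕ) : Option (ChLetter n) :=
  if h : 1 ≤ m ∧ m ≤ n then some ⟨m, h⟩ else none

def letterClass (x : ChLetter n) : (ChineseCon n).Quotient :=
  (ChineseCon n).mk' (FreeMonoid.of x)

def readClass (n : ℕ) (t : ℕ → ℕ → ℕ) : (ChineseCon n).Quotient :=
  (ChineseCon n).mk' (FreeMonoid.ofList ((Rr n t).filterMap (toLetter n)))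

lemma readClass_colG {x y : ℕ} (hx : 1 ≤ x) (hxy : x < y) (hyn : y ≤ n) :
    readClass n (colG y x) = letterClass ⟨y, by omega, hyn⟩ * letterClass ⟨x, hx, by omega⟩ := by
  rw [readClass, Rr_colG hx hxy hyn, List.filterMap_cons, List.filterMap_cons, toLetter,
    toLetter, dif_pos ⟨by omega, hyn⟩, dif_pos ⟨hx, by omega⟩]
  rfl

lemma readClass_cOf {x : ℕ} (hx : 1 ≤ x) (hxn : x ≤ n) :
    readClass n (cOf x) = letterClass ⟨x, hx, hxn⟩ := by
  rw [readClass, Rr_cOf hx hxn, List.filterMap_cons, toLetter, dif_pos ⟨hx, hxn⟩]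
  rfl

lemma readClass_sqG {x : ℕ} (hx : 1 ≤ x) (hxn : x ≤ n) :
    readClass n (sqG x) = letterClass ⟨x, hx, hxn⟩ * letterClass ⟨x, hx, hxn⟩ := by
  rw [readClass, Rr_sqG hx hxn, List.filterMap_cons, List.filterMap_cons, toLetter,
    dif_pos ⟨hx, hxn⟩]
  rfl

lemma readClass_genYX {x y : ℕ} (hx : 1 ≤ x) (hxy : x ≤ y) (hyn : y ≤ n) :
    readClass n (genYX y x) = letterClass ⟨y, by omega, hyn⟩ * letterClass ⟨x, hx, by omega⟩ := by
  rcases hxy.eq_or_lt with rfl | hxy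
  · rw [genYX, if_pos rfl, readClass_sqG hx hyn]
  · rw [genYX, if_neg hxy.ne', readClass_colG hx hxy hyn]

lemma letterClass_zyx_eq_zxy {x y z : ChLetter n} (hxy : x.1 ≤ y.1) (hyz : y.1 ≤ z.1) :
    letterClass z * letterClass y * letterClass x = letterClass z * letterClass x * letterClass y :=
  (Con.eq _).mpr (ConGen.Rel.of _ _ ⟨x, y, z, hxy, hyz, Or.inl ⟨rfl, rfl⟩⟩)

lemma letterClass_zyx_eq_yzx {x y z : ChLetter n} (hxy : x.1 ≤ y.1) (hyz : y.1 ≤ z.1) :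
    letterClass z * letterClass y * letterClass x = letterClass y * letterClass z * letterClass x :=
  (Con.eq _).mpr (ConGen.Rel.of _ _ ⟨x, y, z, hxy, hyz, Or.inr ⟨rfl, rfl⟩⟩)

lemma readClass_prod_eq_of_preColo {u v : List (QL n)} (h : PreColo n u v) :
    ((u.map Subtype.val).map (readClass n)).prod =
      ((v.map Subtype.val).map (readClass n)).prod := by
  rcases h with ⟨x, y, hx, hxy, hyn, hu, hv⟩ | ⟨x, hx, hxn, hu, hv⟩ |
    ⟨x, y, hx, hxy, hyn, hu, hv⟩ | ⟨x, y, hx, hxy, hyn, hu, hv⟩ |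
    ⟨x, y, z, hx, hxy, hyz, hzn, hu, hv⟩ | ⟨x, y, z, hx, hxy, hyz, hzn, hu, hv⟩ |
    ⟨x, y, z, hx, hxy, hyz, hzn, hu, hv⟩ <;>
  simp (disch := omega) only [hu, hv, List.map_cons, List.map_nil, List.prod_cons,
    List.prod_nil, mul_one, ← mul_assoc, readClass_cOf, readClass_colG, readClass_sqG,
    readClass_genYX]
  · exact letterClass_zyx_eq_zxy hxy.le le_rfl
  · exact letterClass_zyx_eq_zxy hxy.le le_rfl
  · exact letterClass_zyx_eq_yzx hxy hyz.le
  · exact letterClass_zyx_eq_yzx hxy hyz.le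
  · exact (letterClass_zyx_eq_zxy hxy.le hyz.le).symm.trans (letterClass_zyx_eq_yzx hxy.le hyz.le)

def toChinese (n : ℕ) : (presCon (PreColo n)).Quotient →* (ChineseCon n).Quotient :=
  Con.lift _ (FreeMonoid.lift (readClass n ∘ Subtype.val)) <| presCon_le_ker fun u v h => by
    simpa only [FreeMonoid.lift_ofList, List.map_map] using readClass_prod_eq_of_preColo h

def genClass (c : QL n) : (presCon (PreColo n)).Quotient :=
  (presCon (PreColo n)).mk' (FreeMonoid.of c)

lemma toChinese_genClass (c : QL n) : toChinese n (genClass c) = readClass n c.1 := by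
  rw [toChinese, genClass, Con.lift_mk', FreeMonoid.lift_eval_of, Function.comp_apply]

lemma genClass_mul_eq_of_preColo {a b c : QL n} (h : PreColo n [a, b] [c]) :
    genClass a * genClass b = genClass c :=
  (Con.eq _).mpr (ConGen.Rel.of _ _ h)

lemma genClass_mul_eq_mul_of_preColo {a b c d : QL n} (h : PreColo n [a, b] [c, d]) :
    genClass a * genClass b = genClass c * genClass d :=
  (Con.eq _).mpr (ConGen.Rel.of _ _ h)

def cQ (x : ChLetter n) : QL n := ⟨cOf x, Or.inr (Or.inl ⟨x, x.2.1, x.2.2, rfl⟩)⟩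

def colQ (x z : ChLetter n) (hxz : x.1 < z.1) : QL n :=
  ⟨colG z x, Or.inl ⟨x, z, x.2.1, hxz, z.2.2, rfl⟩⟩

lemma genClass_cQ_mul_cQ {x y : ChLetter n} (hxy : x.1 < y.1) :
    genClass (cQ y) * genClass (cQ x) = genClass (colQ x y hxy) :=
  genClass_mul_eq_of_preColo (Or.inl ⟨x, y, x.2.1, hxy, y.2.2, rfl, rfl⟩)

lemma genClass_colQ_mul_cQ_comm {x y z : ChLetter n} (hxy : x.1 ≤ y.1) (hyz : y.1 ≤ z.1)
    (hxz : x.1 < z.1) :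
    genClass (colQ x z hxz) * genClass (cQ y) = genClass (cQ y) * genClass (colQ x z hxz) := by
  rcases hyz.eq_or_lt with hyz | hyz
  · obtain rfl : y = z := Subtype.ext hyz
    exact (genClass_mul_eq_mul_of_preColo
      (Or.inr (Or.inr (Or.inl ⟨x, y, x.2.1, hxz, y.2.2, rfl, rfl⟩)))).symm
  rcases hxy.eq_or_lt with hxy | hxy
  · obtain rfl : x = y := Subtype.ext hxy
    exact genClass_mul_eq_mul_of_preColo
      (Or.inr (Or.inr (Or.inr (Or.inr (Or.inl ⟨x, x, z, x.2.1, le_rfl, hxz, z.2.2, rfl, rfl⟩)))))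
  · exact genClass_mul_eq_mul_of_preColo (Or.inr (Or.inr (Or.inr (Or.inr (Or.inr (Or.inr
      ⟨x, y, z, x.2.1, hxy, hyz, z.2.2, rfl, rfl⟩))))))

lemma genClass_cQ_mul_colQ {x y z : ChLetter n} (hxy : x.1 < y.1) (hyz : y.1 < z.1) :
    genClass (cQ z) * genClass (colQ x y hxy) =
      genClass (cQ y) * genClass (colQ x z (hxy.trans hyz)) :=
  genClass_mul_eq_mul_of_preColo (Or.inr (Or.inr (Or.inr (Or.inr (Or.inr (Or.inl
    ⟨x, y, z, x.2.1, hxy.le, hyz, z.2.2, by simp [cQ, colQ, genYX, hxy.ne'], rfl⟩))))))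

lemma genClass_zyx {x y z : ChLetter n} (hxy : x.1 ≤ y.1) (hyz : y.1 ≤ z.1) (hxz : x.1 < z.1) :
    genClass (cQ z) * genClass (cQ y) * genClass (cQ x) =
      genClass (cQ y) * genClass (colQ x z hxz) := by
  rcases hyz.eq_or_lt with hyz | hyz
  · obtain rfl : y = z := Subtype.ext hyz
    rw [mul_assoc, genClass_cQ_mul_cQ hxz]
  rcases hxy.eq_or_lt with hxy | hxy
  · obtain rfl : x = y := Subtype.ext hxy
    rw [genClass_cQ_mul_cQ hxz, genClass_colQ_mul_cQ_comm le_rfl hyz.le]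
  · rw [mul_assoc, genClass_cQ_mul_cQ hxy, genClass_cQ_mul_colQ hxy hyz]

lemma genClass_zxy {x y z : ChLetter n} (hxy : x.1 ≤ y.1) (hyz : y.1 ≤ z.1) (hxz : x.1 < z.1) :
    genClass (cQ z) * genClass (cQ x) * genClass (cQ y) =
      genClass (cQ y) * genClass (colQ x z hxz) := by
  rw [genClass_cQ_mul_cQ hxz, genClass_colQ_mul_cQ_comm hxy hyz]

lemma genClass_yzx {x y z : ChLetter n} (hxz : x.1 < z.1) :
    genClass (cQ y) * genClass (cQ z) * genClass (cQ x) =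
      genClass (cQ y) * genClass (colQ x z hxz) := by
  rw [mul_assoc, genClass_cQ_mul_cQ hxz]

lemma chineseCon_le_ker : ChineseCon n ≤ Con.ker (FreeMonoid.lift (genClass ∘ cQ (n := n))) := by
  refine Con.conGen_le.mpr fun u v h => ?_
  obtain ⟨x, y, z, hxy, hyz, ⟨rfl, rfl⟩ | ⟨rfl, rfl⟩⟩ := h
  all_goals
    simp only [Con.ker_rel, FreeMonoid.lift_ofList, List.map_cons, List.map_nil, List.prod_cons,
      List.prod_nil, mul_one, ← mul_assoc, Function.comp_apply]
    rcases (hxy.trans hyz).eq_or_lt with hxz | hxz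
    · obtain ⟨rfl, rfl⟩ : x = y ∧ y = z := ⟨Subtype.ext (by omega), Subtype.ext (by omega)⟩
      rfl
  · rw [genClass_zyx hxy hyz hxz, genClass_zxy hxy hyz hxz]
  · rw [genClass_zyx hxy hyz hxz, genClass_yzx hxz]

def ofChinese (n : ℕ) : (ChineseCon n).Quotient →* (presCon (PreColo n)).Quotient :=
  Con.lift _ (FreeMonoid.lift (genClass ∘ cQ)) chineseCon_le_ker

lemma ofChinese_letterClass (x : ChLetter n) : ofChinese n (letterClass x) = genClass (cQ x) := by
  rw [ofChinese, letterClass, Con.lift_mk', FreeMonoid.lift_eval_of, Function.comp_apply]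

lemma toChinese_comp_ofChinese : (toChinese n).comp (ofChinese n) = MonoidHom.id _ :=
  Con.hom_ext <| FreeMonoid.hom_eq fun x => by
    simp only [MonoidHom.comp_apply, MonoidHom.id_apply]
    change toChinese n (ofChinese n (letterClass x)) = letterClass x
    rw [ofChinese_letterClass, toChinese_genClass, cQ, readClass_cOf x.2.1 x.2.2]

lemma ofChinese_comp_toChinese : (ofChinese n).comp (toChinese n) = MonoidHom.id _ :=
  Con.hom_ext <| FreeMonoid.hom_eq fun c => by
    simp only [MonoidHom.comp_apply, MonoidHom.id_apply]
    change ofChinese n (toChinese n (genClass c)) = genClass c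
    rw [toChinese_genClass]
    rcases c with ⟨c, ⟨x, y, hx, hxy, hyn, rfl⟩ | ⟨x, hx, hxn, rfl⟩ | ⟨x, hx, hxn, rfl⟩⟩
    · rw [readClass_colG hx hxy hyn, map_mul, ofChinese_letterClass, ofChinese_letterClass]
      exact genClass_cQ_mul_cQ (x := ⟨x, hx, by omega⟩) (y := ⟨y, by omega, hyn⟩) hxy
    · exact (congrArg _ (readClass_cOf hx hxn)).trans (ofChinese_letterClass _)
    · rw [readClass_sqG (by omega) hxn.le, map_mul, ofChinese_letterClass]
      exact genClass_mul_eq_of_preColo (Or.inr (Or.inl ⟨x, hx, hxn, rfl, rfl⟩))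

def preColoEquivChinese (n : ℕ) : (presCon (PreColo n)).Quotient ≃* (ChineseCon n).Quotient :=
  (toChinese n).toMulEquiv (ofChinese n) ofChinese_comp_toChinese toChinese_comp_ofChinese

lemma finite_Qn (n : ℕ) : (Qn n).Finite := by
  refine ((((Set.finite_Iic n).prod (Set.finite_Iic n)).image fun p => colG p.1 p.2).union
    ((Set.finite_Iic n).image sqG)).subset ?_
  rintro c (⟨x, y, -, hxy, hyn, rfl⟩ | ⟨x, -, hxn, rfl⟩ | ⟨x, -, hxn, rfl⟩)
  · exact Or.inl ⟨(y, x), ⟨hyn, (hxy.trans_le hyn).le⟩, rfl⟩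
  · exact Or.inl ⟨(x, x), ⟨hxn, hxn⟩, rfl⟩
  · exact Or.inr ⟨x, hxn.le, rfl⟩

lemma length_of_preColo {u v : List (QL n)} (h : PreColo n u v) : u.length = 2 ∧ v.length ≤ 2 := by
  rw [← List.length_map (f := Subtype.val) (as := u),
    ← List.length_map (f := Subtype.val) (as := v)]
  rcases h with ⟨_, _, _, _, _, hu, hv⟩ | ⟨_, _, _, hu, hv⟩ | ⟨_, _, _, _, _, hu, hv⟩ |
    ⟨_, _, _, _, _, hu, hv⟩ | ⟨_, _, _, _, _, _, _, hu, hv⟩ | ⟨_, _, _, _, _, _, _, hu, hv⟩ |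
    ⟨_, _, _, _, _, _, _, hu, hv⟩ <;> simp [hu, hv]

end ChinesePresentation

theorem preColo_finite_semiquadratic_presentation_general (n : ℕ) :
    (Qn n).Finite ∧
    {p : List (QL n) × List (QL n) | PreColo n p.1 p.2}.Finite ∧
    (∀ u v : List (QL n), PreColo n u v → u.length = 2 ∧ v.length ≤ 2) ∧
    Nonempty ((presCon (PreColo n)).Quotient ≃* (ChineseCon n).Quotient) := by
  have hQ := ChinesePresentation.finite_Qn n
  have : Finite (QL n) := hQ.to_subtype
  have hlen : ∀ u v : List (QL n), PreColo n u v → u.length = 2 ∧ v.length ≤ 2 :=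
    fun _ _ => ChinesePresentation.length_of_preColo
  refine ⟨hQ, finite_setOf_rel_of_length_le fun u v h => ⟨(hlen u v h).1.le, (hlen u v h).2⟩,
    hlen, ⟨ChinesePresentation.preColoEquivChinese n⟩⟩

/-- For every `n ≥ 1`, the rewriting system `PreColo_2(n)` on the alphabet
`Q_n` is a finite semi-quadratic presentation of the Chinese monoid `C_n`:
every rule has source of length `2` and target of length at most `2`, and the
monoid presented by `PreColo_2(n)` is isomorphic to `C_n`. -/
theorem preColo_finite_semiquadratic_presentation (n : ℕ) (hn : 1 ≤ n) :
    (Qn n).Finite ∧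
    {p : List (QL n) × List (QL n) | PreColo n p.1 p.2}.Finite ∧
    (∀ u v : List (QL n), PreColo n u v → u.length = 2 ∧ v.length ≤ 2) ∧
    Nonempty ((presCon (PreColo n)).Quotient ≃* (ChineseCon n).Quotient) :=
  preColo_finite_semiquadratic_presentation_general n
end
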